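/- Fix an integer d ≥ 1, T > 0, and a function f : [0,T] × {1,…,d} → ℝ such that s ↦ f(s,i) is continuous on [0,T] for every i. Let 0 ≤ t₁ ≤ t₂ ≤ T. Then for every γ > 0 there exists a constant C > 0 such that for all μ, ν ∈ 𝕄_T with kernels K_μ, K_ν: max_{1≤i≤d} | ∫_{t₁}^{t₂} f(s,i) (K_μ(s,i) − K_ν(s,i)) ds | ≤ C · d_T(μ,ν) + γ. -/
import Mathlib


open MeasureTheory

/-- A kernel on `[0,T] × {1,…,d}`. -/
def IsMKernel (d : ℕ) (T : ℝ) (K : ℝ → Fin d → ℝ) : Prop :=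
  (∀ i : Fin d, Measurable fun s => K s i) ∧
    ∀ s ∈ Set.Icc (0:ℝ) T, (∀ i : Fin d, 0 ≤ K s i) ∧ ∑ i : Fin d, K s i = 1

/-- A bounded measurable function is interval integrable. -/
lemma bdd_meas_intervalIntegrable (u v : ℝ) (k : ℝ → ℝ) (hk : Measurable k) (M : ℝ)
    (hb : ∀ s ∈ Set.uIoc u v, ‖k s‖ ≤ M) :
    IntervalIntegrable k volume u v := by
  rw [intervalIntegrable_iff]
  refine Measure.integrableOn_of_bounded (M := M) ?_ hk.aestronglyMeasurable
    (ae_restrict_of_forall_mem measurableSet_uIoc hb)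
  rw [Set.uIoc]
  exact measure_Ioc_lt_top.ne

/-- Product of a continuous function and a bounded measurable function is
interval integrable. -/
lemma prod_intervalIntegrable (T u v : ℝ) (hu : 0 ≤ u) (huv : u ≤ v) (hv : v ≤ T)
    (g k : ℝ → ℝ) (hg : ContinuousOn g (Set.Icc (0:ℝ) T)) (hk : Measurable k) (M : ℝ)
    (hb : ∀ s ∈ Set.Icc (0:ℝ) T, ‖k s‖ ≤ M) :
    IntervalIntegrable (fun s => g s * k s) volume u v := by
  rw [intervalIntegrable_iff_integrableOn_Ioc_of_le huv]
  have hsub : Set.Ioc u v ⊆ Set.Icc (0:ℝ) T := fun x hx => ⟨hu.trans hx.1.le, hx.2.trans hv⟩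
  have hgI : IntegrableOn g (Set.Ioc u v) :=
    ((hg.mono (Set.Icc_subset_Icc hu hv)).integrableOn_Icc).mono_set Set.Ioc_subset_Icc_self
  have hbd : ∀ᵐ x ∂(volume.restrict (Set.Ioc u v)), ‖k x‖ ≤ M :=
    ae_restrict_of_forall_mem measurableSet_Ioc (fun x hx => hb x (hsub hx))
  have := Integrable.bdd_mul (c := M) hgI (hk.aestronglyMeasurable.restrict) hbd
  exact this.congr (Filter.Eventually.of_forall fun x => mul_comm _ _)

/-- For `f(·,i)` continuous on `[0,T]` and every `γ > 0` there is a constant `C > 0`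
such that for all `μ, ν ∈ 𝕄_T` (with kernels `K_μ, K_ν`) and every `i`,
`|∫_{t₁}^{t₂} f(s,i)(K_μ(s,i) − K_ν(s,i)) ds| ≤ C·d_T(μ,ν) + γ`; the metric `d_T` is
the supremum distance on `C([0,T], ℝ^d)`. -/
theorem integral_kernel_diff_bound (d : ℕ) (hd : 1 ≤ d) (T : ℝ) (hT : 0 < T)
    (f : ℝ → Fin d → ℝ) (hf : ∀ i : Fin d, ContinuousOn (fun s => f s i) (Set.Icc (0:ℝ) T))
    (t₁ t₂ : ℝ) (ht₁ : 0 ≤ t₁) (ht₁₂ : t₁ ≤ t₂) (ht₂ : t₂ ≤ T)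
    (γ : ℝ) (hγ : 0 < γ) :
    ∃ C : ℝ, 0 < C ∧
      ∀ μ ν : C(Set.Icc (0:ℝ) T, Fin d → ℝ), ∀ Kμ Kν : ℝ → Fin d → ℝ,
        IsMKernel d T Kμ → IsMKernel d T Kν →
        (∀ t : Set.Icc (0:ℝ) T, ∀ i : Fin d, μ t i = ∫ s in (0:ℝ)..(t:ℝ), Kμ s i) →
        (∀ t : Set.Icc (0:ℝ) T, ∀ i : Fin d, ν t i = ∫ s in (0:ℝ)..(t:ℝ), Kν s i) →
        ∀ i : Fin d,
          |∫ s in t₁..t₂, f s i * (Kμ s i - Kν s i)| ≤ C * dist μ ν + γ := by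
  have hF : ContinuousOn f (Set.Icc (0:ℝ) T) := continuousOn_pi.mpr hf
  obtain ⟨M, hM⟩ := isCompact_Icc.exists_bound_of_continuousOn hF
  have hM0 : 0 ≤ M := le_trans (norm_nonneg _) (hM 0 ⟨le_rfl, hT.le⟩)
  set ε := γ / (2 * T + 2) with hεdef
  have hε : 0 < ε := div_pos hγ (by linarith)
  have hUC := isCompact_Icc.uniformContinuousOn_of_continuous hF
  rw [Metric.uniformContinuousOn_iff] at hUC
  obtain ⟨δ, hδ, hδ'⟩ := hUC ε hε
  obtain ⟨n, hn⟩ := exists_nat_gt ((t₂ - t₁) / δ)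
  have hn0 : 0 < n := by
    have h1 : (0:ℝ) ≤ (t₂ - t₁) / δ := div_nonneg (by linarith) hδ.le
    exact_mod_cast h1.trans_lt hn
  have hn0' : (0:ℝ) < n := by exact_mod_cast hn0
  refine ⟨2 * n * M + 1, by positivity, ?_⟩
  intro μ ν Kμ Kν hKμ hKν hμ hν i
  set m := (t₂ - t₁) / n with hm
  have hm0 : 0 ≤ m := div_nonneg (by linarith) hn0'.le
  have hmδ : m < δ := by
    rw [hm, div_lt_iff₀ hn0']
    calc t₂ - t₁ < n * δ := by
          have := (div_lt_iff₀ hδ).mp hn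
          linarith
      _ = δ * n := mul_comm _ _
  set a : ℕ → ℝ := fun j => t₁ + j * m with ha
  have hnm : (n : ℝ) * m = t₂ - t₁ := by
    rw [hm]; field_simp
  have haj : ∀ j : ℕ, j ≤ n → a j ∈ Set.Icc t₁ t₂ := by
    intro j hj
    constructor
    · simp only [ha]
      nlinarith [mul_nonneg (Nat.cast_nonneg (α := ℝ) j) hm0]
    · simp only [ha]
      have : (j : ℝ) * m ≤ n * m := by
        apply mul_le_mul_of_nonneg_right _ hm0
        exact_mod_cast hj
      linarith [hnm]
  have hajT : ∀ j : ℕ, j ≤ n → a j ∈ Set.Icc (0:ℝ) T := by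
    intro j hj
    obtain ⟨h1, h2⟩ := haj j hj
    exact ⟨ht₁.trans h1, h2.trans ht₂⟩
  have ha0 : a 0 = t₁ := by simp [ha]
  have han : a n = t₂ := by simp only [ha]; linarith [hnm]
  have hastep : ∀ j : ℕ, a (j + 1) = a j + m := by
    intro j; simp only [ha]; push_cast; ring
  have hamono : ∀ j : ℕ, a j ≤ a (j + 1) := by
    intro j; rw [hastep]; linarith
  -- kernel bounds
  have hK1 : ∀ (K : ℝ → Fin d → ℝ), IsMKernel d T K →
      ∀ s ∈ Set.Icc (0:ℝ) T, ‖K s i‖ ≤ 1 := by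
    intro K hK s hs
    obtain ⟨hpos, hsum⟩ := hK.2 s hs
    rw [Real.norm_eq_abs, abs_of_nonneg (hpos i)]
    calc K s i ≤ ∑ j : Fin d, K s j :=
          Finset.single_le_sum (fun j _ => hpos j) (Finset.mem_univ i)
      _ = 1 := hsum
  set k : ℝ → ℝ := fun s => Kμ s i - Kν s i with hkdef
  have hkm : Measurable k := (hKμ.1 i).sub (hKν.1 i)
  have hkb : ∀ s ∈ Set.Icc (0:ℝ) T, ‖k s‖ ≤ 2 := by
    intro s hs
    calc ‖k s‖ ≤ ‖Kμ s i‖ + ‖Kν s i‖ := norm_sub_le _ _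
      _ ≤ 1 + 1 := add_le_add (hK1 Kμ hKμ s hs) (hK1 Kν hKν s hs)
      _ = 2 := by norm_num
  -- interval integrability on each subinterval
  have hint : ∀ j < n, IntervalIntegrable (fun s => f s i * k s) volume (a j) (a (j + 1)) := by
    intro j hj
    exact prod_intervalIntegrable T (a j) (a (j+1)) (hajT j hj.le).1 (hamono j)
      (hajT (j+1) hj).2 _ k (hf i) hkm 2 hkb
  have hsum := intervalIntegral.sum_integral_adjacent_intervals
    (f := fun s => f s i * k s) (μ := volume) (a := a) hint
  rw [ha0, han] at hsum
  -- per value bound for μ ν at points of [0,T]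
  have hpt : ∀ t : Set.Icc (0:ℝ) T, |μ t i - ν t i| ≤ dist μ ν := by
    intro t
    calc |μ t i - ν t i| = dist (μ t i) (ν t i) := (Real.dist_eq _ _).symm
      _ ≤ dist (μ t) (ν t) := dist_le_pi_dist _ _ i
      _ ≤ dist μ ν := ContinuousMap.dist_apply_le_dist t
  -- key per-interval estimate
  have hterm : ∀ j < n,
      |∫ s in a j..a (j + 1), f s i * k s| ≤ 2 * ε * m + 2 * M * dist μ ν := by
    intro j hj
    have hj0T := hajT j hj.le
    have hj1T := hajT (j+1) hj
    set c := a j with hc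
    -- split integrand
    have hI1 : IntervalIntegrable (fun s => (f s i - f c i) * k s) volume (a j) (a (j+1)) :=
      prod_intervalIntegrable T (a j) (a (j+1)) hj0T.1 (hamono j) hj1T.2
        (fun s => f s i - f c i) k ((hf i).sub continuousOn_const) hkm 2 hkb
    have hI2 : IntervalIntegrable (fun s => f c i * k s) volume (a j) (a (j+1)) :=
      prod_intervalIntegrable T (a j) (a (j+1)) hj0T.1 (hamono j) hj1T.2
        (fun _ => f c i) k continuousOn_const hkm 2 hkb
    have hsplit : (∫ s in a j..a (j + 1), f s i * k s)
        = (∫ s in a j..a (j + 1), (f s i - f c i) * k s)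
          + ∫ s in a j..a (j + 1), f c i * k s := by
      rw [← intervalIntegral.integral_add hI1 hI2]
      congr 1; ext s; ring
    -- first part
    have hfirst : |∫ s in a j..a (j + 1), (f s i - f c i) * k s| ≤ 2 * ε * m := by
      have hb : ∀ x ∈ Set.uIoc (a j) (a (j+1)), ‖(f x i - f c i) * k x‖ ≤ ε * 2 := by
        intro x hx
        rw [Set.uIoc_of_le (hamono j)] at hx
        have hxT : x ∈ Set.Icc (0:ℝ) T :=
          ⟨hj0T.1.trans hx.1.le, hx.2.trans hj1T.2⟩
        have hdx : dist x c < δ := by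
          rw [Real.dist_eq, abs_of_pos (by linarith [hx.1] : (0:ℝ) < x - c)]
          have := hx.2
          rw [hastep j] at this
          linarith
        have hfd : dist (f x) (f c) < ε := hδ' x hxT c hj0T hdx
        have hfi : |f x i - f c i| ≤ ε := by
          calc |f x i - f c i| = dist (f x i) (f c i) := (Real.dist_eq _ _).symm
            _ ≤ dist (f x) (f c) := dist_le_pi_dist _ _ i
            _ ≤ ε := hfd.le
        rw [norm_mul]
        exact mul_le_mul hfi (hkb x hxT) (norm_nonneg _) hε.le
      have := intervalIntegral.norm_integral_le_of_norm_le_const hb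
      rw [Real.norm_eq_abs] at this
      calc |∫ s in a j..a (j + 1), (f s i - f c i) * k s| ≤ ε * 2 * |a (j+1) - a j| := this
        _ = 2 * ε * m := by
            rw [hastep j]
            rw [abs_of_nonneg (by linarith : (0:ℝ) ≤ a j + m - a j)]
            ring_nf
    -- second part
    have hKint : ∀ (K : ℝ → Fin d → ℝ), IsMKernel d T K → ∀ t ∈ Set.Icc (0:ℝ) T,
        IntervalIntegrable (fun s => K s i) volume 0 t := by
      intro K hK t ht
      refine bdd_meas_intervalIntegrable 0 t _ (hK.1 i) 1 ?_
      intro s hs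
      rw [Set.uIoc_of_le ht.1] at hs
      exact hK1 K hK s ⟨hs.1.le, hs.2.trans ht.2⟩
    have hμint : (∫ s in a j..a (j+1), Kμ s i)
        = μ ⟨a (j+1), hj1T⟩ i - μ ⟨a j, hj0T⟩ i := by
      rw [hμ ⟨a (j+1), hj1T⟩ i, hμ ⟨a j, hj0T⟩ i]
      exact (intervalIntegral.integral_interval_sub_left
        (hKint Kμ hKμ _ hj1T) (hKint Kμ hKμ _ hj0T)).symm
    have hνint : (∫ s in a j..a (j+1), Kν s i)
        = ν ⟨a (j+1), hj1T⟩ i - ν ⟨a j, hj0T⟩ i := by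
      rw [hν ⟨a (j+1), hj1T⟩ i, hν ⟨a j, hj0T⟩ i]
      exact (intervalIntegral.integral_interval_sub_left
        (hKint Kν hKν _ hj1T) (hKint Kν hKν _ hj0T)).symm
    have hkint : (∫ s in a j..a (j+1), k s)
        = (μ ⟨a (j+1), hj1T⟩ i - ν ⟨a (j+1), hj1T⟩ i)
          - (μ ⟨a j, hj0T⟩ i - ν ⟨a j, hj0T⟩ i) := by
      have h1 : IntervalIntegrable (fun s => Kμ s i) volume (a j) (a (j+1)) := by
        refine bdd_meas_intervalIntegrable _ _ _ (hKμ.1 i) 1 ?_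
        intro s hs
        rw [Set.uIoc_of_le (hamono j)] at hs
        exact hK1 Kμ hKμ s ⟨hj0T.1.trans hs.1.le, hs.2.trans hj1T.2⟩
      have h2 : IntervalIntegrable (fun s => Kν s i) volume (a j) (a (j+1)) := by
        refine bdd_meas_intervalIntegrable _ _ _ (hKν.1 i) 1 ?_
        intro s hs
        rw [Set.uIoc_of_le (hamono j)] at hs
        exact hK1 Kν hKν s ⟨hj0T.1.trans hs.1.le, hs.2.trans hj1T.2⟩
      rw [hkdef]
      rw [intervalIntegral.integral_sub h1 h2, hμint, hνint]
      ring
    have hsecond : |∫ s in a j..a (j + 1), f c i * k s| ≤ 2 * M * dist μ ν := by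
      rw [intervalIntegral.integral_const_mul, abs_mul, hkint]
      have hfc : |f c i| ≤ M := by
        calc |f c i| = ‖f c i‖ := rfl
          _ ≤ ‖f c‖ := norm_le_pi_norm (f c) i
          _ ≤ M := hM c hj0T
      have habs : |(μ ⟨a (j+1), hj1T⟩ i - ν ⟨a (j+1), hj1T⟩ i)
          - (μ ⟨a j, hj0T⟩ i - ν ⟨a j, hj0T⟩ i)| ≤ 2 * dist μ ν := by
        calc |(μ ⟨a (j+1), hj1T⟩ i - ν ⟨a (j+1), hj1T⟩ i)
            - (μ ⟨a j, hj0T⟩ i - ν ⟨a j, hj0T⟩ i)|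
            ≤ |μ ⟨a (j+1), hj1T⟩ i - ν ⟨a (j+1), hj1T⟩ i|
              + |μ ⟨a j, hj0T⟩ i - ν ⟨a j, hj0T⟩ i| := abs_sub _ _
          _ ≤ dist μ ν + dist μ ν := add_le_add (hpt _) (hpt _)
          _ = 2 * dist μ ν := by ring
      calc |f c i| * |(μ ⟨a (j+1), hj1T⟩ i - ν ⟨a (j+1), hj1T⟩ i)
          - (μ ⟨a j, hj0T⟩ i - ν ⟨a j, hj0T⟩ i)|
          ≤ M * (2 * dist μ ν) := mul_le_mul hfc habs (abs_nonneg _) hM0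
        _ = 2 * M * dist μ ν := by ring
    calc |∫ s in a j..a (j + 1), f s i * k s|
        ≤ |∫ s in a j..a (j + 1), (f s i - f c i) * k s|
          + |∫ s in a j..a (j + 1), f c i * k s| := by
          rw [hsplit]; exact abs_add_le _ _
      _ ≤ 2 * ε * m + 2 * M * dist μ ν := add_le_add hfirst hsecond
  -- combine
  have hd0 : 0 ≤ dist μ ν := dist_nonneg
  have hεT : 2 * ε * (t₂ - t₁) ≤ γ := by
    have h1 : 2 * (t₂ - t₁) ≤ 2 * T + 2 := by linarith
    have h2 : ε * (2 * (t₂ - t₁)) ≤ ε * (2 * T + 2) :=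
      mul_le_mul_of_nonneg_left h1 hε.le
    have h3 : ε * (2 * T + 2) = γ := by
      rw [hεdef]; field_simp
    linarith
  calc |∫ s in t₁..t₂, f s i * (Kμ s i - Kν s i)|
      = |∑ j ∈ Finset.range n, ∫ s in a j..a (j + 1), f s i * k s| := by rw [hsum]
    _ ≤ ∑ j ∈ Finset.range n, |∫ s in a j..a (j + 1), f s i * k s| :=
        Finset.abs_sum_le_sum_abs _ _
    _ ≤ ∑ _j ∈ Finset.range n, (2 * ε * m + 2 * M * dist μ ν) :=
        Finset.sum_le_sum (fun j hj => hterm j (Finset.mem_range.mp hj))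
    _ = n * (2 * ε * m + 2 * M * dist μ ν) := by
        rw [Finset.sum_const, Finset.card_range, nsmul_eq_mul]
    _ = 2 * ε * (n * m) + 2 * n * M * dist μ ν := by ring
    _ = 2 * ε * (t₂ - t₁) + 2 * n * M * dist μ ν := by rw [hnm]
    _ ≤ γ + 2 * n * M * dist μ ν := by linarith
    _ ≤ (2 * n * M + 1) * dist μ ν + γ := by nlinarith
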